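/- For a continuous action φ: G × X → X on a compact metric space, a Borel probability measure μ satisfies μ(closure(PSh(φ))) = 1 if and only if μ lies in the weak* closure of M_{PSh}(X,φ), the set of measures compatible with the persistent shadowing property. -/

import Mathlib

/-! Every neighbourhood of a point `x` in the support of a compatible measure has positive
measure, so it contains points of `PShSet S φ δ ε` arbitrarily close to `x`; redirecting a pseudo
orbit at time `1` to such a point shows that the support consists of persistently shadowable
points. So compatible measures live on the closed set `closure PSh(φ)`, and by the portmanteau
theorem so do their weak limits. Conversely, if `μ` lives on `closure PSh(φ)`, push it forward by
simple functions with values in `PSh(φ)` converging to the identity there: the images have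
finitely many atoms, all persistently shadowable, so they are compatible, and they converge
weakly to `μ`. -/

open MeasureTheory

def ContGroupAction (G : Type*) [Group G] (X : Type*) [MetricSpace X] (φ : G → X → X) : Prop :=
  (∀ g : G, Continuous (φ g)) ∧ (∀ g h : G, ∀ x : X, φ (g * h) x = φ g (φ h x)) ∧
    (∀ x : X, φ (1 : G) x = x)

def IsPseudoOrbit {G : Type*} [Group G] {X : Type*} [MetricSpace X]
    (S : Set G) (ψ : G → X → X) (δ : ℝ) (f : G → X) : Prop :=
  ∀ s ∈ S, ∀ g : G, dist (f (s * g)) (ψ s (f g)) < δ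

def CloseActions {G : Type*} [Group G] {X : Type*} [MetricSpace X]
    (S : Set G) (φ ψ : G → X → X) (δ : ℝ) : Prop :=
  ∀ s ∈ S, ∀ x : X, dist (φ s x) (ψ s x) < δ

def PersistentShadowing {G : Type*} [Group G] {X : Type*} [MetricSpace X]
    (S : Set G) (φ : G → X → X) : Prop :=
  ∀ ε > (0:ℝ), ∃ δ > (0:ℝ), ∀ ψ : G → X → X, ContGroupAction G X ψ → CloseActions S φ ψ δ →
    ∀ f : G → X, IsPseudoOrbit S ψ δ f → ∃ p : X, ∀ g : G, dist (f g) (ψ g p) < ε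

def Shadowing {G : Type*} [Group G] {X : Type*} [MetricSpace X]
    (S : Set G) (φ : G → X → X) : Prop :=
  ∀ ε > (0:ℝ), ∃ δ > (0:ℝ), ∀ f : G → X, IsPseudoOrbit S φ δ f →
    ∃ p : X, ∀ g : G, dist (f g) (φ g p) < ε

def PShSet {G : Type*} [Group G] {X : Type*} [MetricSpace X]
    (S : Set G) (φ : G → X → X) (δ ε : ℝ) : Set X :=
  {x | ∀ ψ : G → X → X, ContGroupAction G X ψ → CloseActions S φ ψ δ →
    ∀ f : G → X, IsPseudoOrbit S ψ δ f → f 1 = x →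
      ∃ p : X, ∀ g : G, dist (f g) (ψ g p) < ε}

def PShPoint {G : Type*} [Group G] {X : Type*} [MetricSpace X]
    (S : Set G) (φ : G → X → X) (x : X) : Prop :=
  ∀ ε > (0:ℝ), ∃ δ > (0:ℝ), x ∈ PShSet S φ δ ε

def ShPoint {G : Type*} [Group G] {X : Type*} [MetricSpace X]
    (S : Set G) (φ : G → X → X) (x : X) : Prop :=
  ∀ ε > (0:ℝ), ∃ δ > (0:ℝ), ∀ f : G → X, IsPseudoOrbit S φ δ f → f 1 = x →
    ∃ p : X, ∀ g : G, dist (f g) (φ g p) < ε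

def UPersisBetaPoint {G : Type*} [Group G] {X : Type*} [MetricSpace X]
    (S : Set G) (φ : G → X → X) (x : X) : Prop :=
  ∀ ε > (0:ℝ), ∃ δ > (0:ℝ), ∀ ψ : G → X → X, ContGroupAction G X ψ → CloseActions S φ ψ δ →
    ∀ x' : X, dist x' x < δ → ∃ y : X, ∀ g : G, dist (φ g x') (ψ g y) < ε

def BetaPersistent {G : Type*} [Group G] {X : Type*} [MetricSpace X]
    (S : Set G) (φ : G → X → X) : Prop :=
  ∀ ε > (0:ℝ), ∃ δ > (0:ℝ), ∀ ψ : G → X → X, ContGroupAction G X ψ → CloseActions S φ ψ δ →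
    ∀ x : X, ∃ y : X, ∀ g : G, dist (φ g x) (ψ g y) < ε

def CompatiblePSh {G : Type*} [Group G] {X : Type*} [MetricSpace X] [MeasurableSpace X]
    (S : Set G) (φ : G → X → X) (μ : Measure X) : Prop :=
  ∀ ε > (0:ℝ), ∃ δ > (0:ℝ), ∀ A : Set X, MeasurableSet A → 0 < μ A →
    (A ∩ PShSet S φ δ ε).Nonempty

def MeasSupp {X : Type*} [MetricSpace X] [MeasurableSpace X] (μ : Measure X) : Set X :=
  {x | ∀ U : Set X, IsOpen U → x ∈ U → 0 < μ U}

open Filter Set Topology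

lemma ProbabilityMeasure.isClosed_setOf_apply_eq_one {Ω : Type*} [MeasurableSpace Ω]
    [TopologicalSpace Ω] [OpensMeasurableSpace Ω] [HasOuterApproxClosed Ω] {F : Set Ω}
    (hF : IsClosed F) : IsClosed {μ : ProbabilityMeasure Ω | (μ : Measure Ω) F = 1} := by
  refine isClosed_iff_clusterPt.2 fun μ hμ => ?_
  set s := {μ : ProbabilityMeasure Ω | (μ : Measure Ω) F = 1}
  have : (𝓝 μ ⊓ 𝓟 s).NeBot := hμ
  have hlimsup := ProbabilityMeasure.limsup_measure_closed_le_of_tendsto (μs := id)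
    (tendsto_id.mono_left (inf_le_left : 𝓝 μ ⊓ 𝓟 s ≤ 𝓝 μ)) hF
  have hev : ∀ᶠ ν in 𝓝 μ ⊓ 𝓟 s, ((id ν : ProbabilityMeasure Ω) : Measure Ω) F = 1 :=
    eventually_inf_principal.2 (.of_forall fun ν hν => hν)
  rw [limsup_congr hev, limsup_const] at hlimsup
  exact le_antisymm prob_le_one hlimsup

section PersistentShadowing

variable {G X : Type*} [Group G] [MetricSpace X] {S : Set G} {φ : G → X → X}

lemma CloseActions.mono {ψ : G → X → X} {δ δ' : ℝ} (h : CloseActions S φ ψ δ) (hδ : δ ≤ δ') :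
    CloseActions S φ ψ δ' :=
  fun s hs x => (h s hs x).trans_le hδ

lemma IsPseudoOrbit.mono {ψ : G → X → X} {δ δ' : ℝ} {f : G → X} (h : IsPseudoOrbit S ψ δ f)
    (hδ : δ ≤ δ') : IsPseudoOrbit S ψ δ' f :=
  fun s hs g => (h s hs g).trans_le hδ

lemma pshSet_mono {δ₁ δ₂ ε₁ ε₂ : ℝ} (hδ : δ₂ ≤ δ₁) (hε : ε₁ ≤ ε₂) :
    PShSet S φ δ₁ ε₁ ⊆ PShSet S φ δ₂ ε₂ := by
  intro x hx ψ hψ hclose f hf hfx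
  obtain ⟨p, hp⟩ := hx ψ hψ (hclose.mono hδ) f (hf.mono hδ) hfx
  exact ⟨p, fun g => (hp g).trans_le hε⟩

lemma PShPoint.eventually_mem_pshSet {x : X} (hx : PShPoint S φ x) {ε : ℝ} (hε : 0 < ε) :
    ∀ᶠ δ in 𝓝[>] (0 : ℝ), x ∈ PShSet S φ δ ε := by
  obtain ⟨δ, hδ, hxδ⟩ := hx ε hε
  filter_upwards [Ioo_mem_nhdsGT hδ] with δ' hδ' using pshSet_mono hδ'.2.le le_rfl hxδ

lemma exists_pos_subset_pshSet_of_finite {F : Set X} (hF : F.Finite)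
    (hP : ∀ x ∈ F, PShPoint S φ x) {ε : ℝ} (hε : 0 < ε) : ∃ δ > 0, F ⊆ PShSet S φ δ ε :=
  (((eventually_all_finite hF).2 fun x hx => (hP x hx).eventually_mem_pshSet hε).and
    self_mem_nhdsWithin).exists.imp fun _ h => ⟨h.2, h.1⟩

lemma IsPseudoOrbit.update_one [DecidableEq G] {ψ : G → X → X} (hψ : ∀ z, ψ 1 z = z)
    {δ κ : ℝ} {f : G → X} (hf : IsPseudoOrbit S ψ δ f) {y : X} (hy : dist y (f 1) < κ)
    (hψy : ∀ s ∈ S, dist (ψ s (f 1)) (ψ s y) < κ) :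
    IsPseudoOrbit S ψ (δ + κ) (Function.update f 1 y) := by
  intro s hs g
  have hδ : 0 < δ := dist_nonneg.trans_lt (hf s hs g)
  have hκ : 0 < κ := dist_nonneg.trans_lt hy
  by_cases hg : g = 1 <;> by_cases hsg : s * g = 1
  · subst hg
    rw [mul_one] at hsg
    subst hsg
    rw [mul_one, Function.update_self, hψ, dist_self]
    positivity
  · subst hg
    rw [Function.update_of_ne hsg, Function.update_self]
    calc dist (f (s * 1)) (ψ s y) ≤ dist (f (s * 1)) (ψ s (f 1)) + dist (ψ s (f 1)) (ψ s y) :=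
          dist_triangle _ _ _
      _ < δ + κ := add_lt_add (hf s hs 1) (hψy s hs)
  · rw [hsg, Function.update_self, Function.update_of_ne hg]
    have h := hf s hs g
    rw [hsg] at h
    calc dist y (ψ s (f g)) ≤ dist y (f 1) + dist (f 1) (ψ s (f g)) := dist_triangle _ _ _
      _ < δ + κ := by linarith
  · rw [Function.update_of_ne hsg, Function.update_of_ne hg]
    linarith [hf s hs g]

lemma mem_pshSet_of_dist_lt {δ δ' ε κ : ℝ} {x y : X} (hy : y ∈ PShSet S φ δ ε)
    (hyx : dist y x < κ) (hφyx : ∀ s ∈ S, dist (φ s y) (φ s x) < κ)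
    (hδ' : 0 ≤ δ') (hδ : 3 * δ' + κ ≤ δ) : x ∈ PShSet S φ δ' (κ + ε) := by
  classical
  intro ψ hψ hclose f hf hfx
  subst hfx
  have hκ : 0 < κ := dist_nonneg.trans_lt hyx
  have hψyx : ∀ s ∈ S, dist (ψ s (f 1)) (ψ s y) < κ + 2 * δ' := by
    intro s hs
    calc dist (ψ s (f 1)) (ψ s y)
        ≤ dist (ψ s (f 1)) (φ s (f 1)) + dist (φ s (f 1)) (φ s y) + dist (φ s y) (ψ s y) :=
          dist_triangle4 _ _ _ _
      _ < δ' + κ + δ' := by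
          gcongr
          · rw [dist_comm]; exact hclose s hs _
          · rw [dist_comm]; exact hφyx s hs
          · exact hclose s hs y
      _ = κ + 2 * δ' := by ring
  have hf' := hf.update_one hψ.2.2 (hyx.trans_le (by linarith)) hψyx
  obtain ⟨p, hp⟩ := hy ψ hψ (hclose.mono (by linarith)) _ (hf'.mono (by linarith))
    (Function.update_self ..)
  refine ⟨p, fun g => ?_⟩
  by_cases hg : g = 1
  · subst hg
    have h1 := hp 1
    rw [Function.update_self] at h1
    calc dist (f 1) (ψ 1 p) ≤ dist (f 1) y + dist y (ψ 1 p) := dist_triangle _ _ _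
      _ < κ + ε := add_lt_add (by rwa [dist_comm]) h1
  · have h1 := hp g
    rw [Function.update_of_ne hg] at h1
    linarith [dist_nonneg.trans_lt hyx]

variable [MeasurableSpace X]

lemma pshPoint_of_mem_support [OpensMeasurableSpace X] (hS : S.Finite)
    (hφ : ∀ g, Continuous (φ g)) {ν : Measure X} (hν : CompatiblePSh S φ ν) {x : X}
    (hx : x ∈ ν.support) : PShPoint S φ x := by
  intro ε hε
  obtain ⟨δ, hδ, hA⟩ := hν (ε / 2) (half_pos hε)
  set κ := min (δ / 4) (ε / 2)
  have hκ : 0 < κ := by positivity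
  have hnear : ∀ᶠ y in 𝓝 x, dist y x < κ ∧ ∀ s ∈ S, dist (φ s y) (φ s x) < κ :=
    (show ∀ᶠ y in 𝓝 x, dist y x < κ from Metric.ball_mem_nhds x hκ).and <|
      (eventually_all_finite hS).2 fun s _ =>
        (hφ s).continuousAt.eventually (Metric.ball_mem_nhds _ hκ)
  obtain ⟨U, hU, hUo, hxU⟩ := eventually_nhds_iff.1 hnear
  obtain ⟨y, hyU, hy⟩ :=
    hA U hUo.measurableSet ((Measure.mem_support_iff_forall x).1 hx U (hUo.mem_nhds hxU))
  refine ⟨δ / 4, by positivity, pshSet_mono le_rfl ?_ <|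
    mem_pshSet_of_dist_lt hy (hU y hyU).1 (hU y hyU).2 (by positivity) ?_⟩
  · linarith [min_le_right (δ / 4) (ε / 2)]
  · linarith [min_le_left (δ / 4) (ε / 2)]

lemma measure_closure_setOf_pshPoint_eq_one [OpensMeasurableSpace X]
    [HereditarilyLindelofSpace X] (hS : S.Finite) (hφ : ∀ g, Continuous (φ g)) {ν : Measure X}
    [IsProbabilityMeasure ν] (hν : CompatiblePSh S φ ν) :
    ν (closure {x | PShPoint S φ x}) = 1 := by
  rw [← prob_compl_eq_zero_iff isClosed_closure.measurableSet]
  refine measure_mono_null (compl_subset_compl.2 fun x hx => ?_) ν.measure_compl_support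
  exact subset_closure (pshPoint_of_mem_support hS hφ hν hx)

lemma compatiblePSh_map_of_finite_range {Ω : Type*} [MeasurableSpace Ω] {T : Ω → X}
    (hT : Measurable T) (hfin : (range T).Finite) (hP : ∀ ω, PShPoint S φ (T ω))
    (μ : Measure Ω) : CompatiblePSh S φ (μ.map T) := by
  intro ε hε
  obtain ⟨δ, hδ, hsub⟩ := exists_pos_subset_pshSet_of_finite hfin (forall_mem_range.2 hP) hε
  refine ⟨δ, hδ, fun A hA hpos => ?_⟩
  rw [Measure.map_apply hT hA] at hpos
  obtain ⟨ω, hω⟩ := nonempty_of_measure_ne_zero hpos.ne'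
  exact ⟨T ω, hω, hsub (mem_range_self ω)⟩

lemma exists_tendsto_compatiblePSh [OpensMeasurableSpace X] [SecondCountableTopology X]
    {μ : ProbabilityMeasure X} (hμ : (μ : Measure X) (closure {x | PShPoint S φ x}) = 1) :
    ∃ ν : ℕ → ProbabilityMeasure X,
      (∀ n, CompatiblePSh S φ (ν n : Measure X)) ∧ Tendsto ν atTop (𝓝 μ) := by
  set P := {x | PShPoint S φ x}
  obtain ⟨y₀, hy₀⟩ : P.Nonempty := by
    by_contra h
    simp [not_nonempty_iff_eq_empty.1 h] at hμ
  let T := SimpleFunc.approxOn id measurable_id P y₀ hy₀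
  have hT_lim : ∀ᵐ z ∂(μ : Measure X), Tendsto (fun n => T n z) atTop (𝓝 z) := by
    filter_upwards [mem_ae_iff.2 ((prob_compl_eq_zero_iff isClosed_closure.measurableSet).2 hμ)]
      with z hz using SimpleFunc.tendsto_approxOn measurable_id hy₀ hz
  refine ⟨fun n => ⟨(μ : Measure X).map (T n),
      Measure.isProbabilityMeasure_map (T n).measurable.aemeasurable⟩,
    fun n => compatiblePSh_map_of_finite_range (T n).measurable (T n).finite_range
      (SimpleFunc.approxOn_mem measurable_id hy₀ n) _, ?_⟩
  have h := (tendstoInDistribution_of_ae_tendsto (fun n => (T n).measurable.aemeasurable)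
    aemeasurable_id hT_lim).tendsto
  simp only [Measure.map_id] at h
  exact h

end PersistentShadowing

theorem stmt17_general {G : Type*} [Group G] {X : Type*} [MetricSpace X] [CompactSpace X]
    [MeasurableSpace X] [BorelSpace X]
    (S : Set G) (hSfin : S.Finite)
    (φ : G → X → X) (hφ : ContGroupAction G X φ)
    (μ : ProbabilityMeasure X) :
    μ.toMeasure (closure {x : X | PShPoint S φ x}) = 1 ↔
      μ ∈ closure {ν : ProbabilityMeasure X | CompatiblePSh S φ ν.toMeasure} := by
  constructor
  · intro hμ
    obtain ⟨ν, hν, hlim⟩ := exists_tendsto_compatiblePSh hμ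
    exact mem_closure_of_tendsto hlim (Eventually.of_forall hν)
  · refine fun hμ => closure_minimal (fun ν hν => ?_)
      (ProbabilityMeasure.isClosed_setOf_apply_eq_one isClosed_closure) hμ
    exact measure_closure_setOf_pshPoint_eq_one hSfin hφ.1 hν

theorem stmt17 {G : Type*} [Group G] {X : Type*} [MetricSpace X] [CompactSpace X]
    [MeasurableSpace X] [BorelSpace X]
    (S : Set G) (hSfin : S.Finite) (hSsym : ∀ s ∈ S, s⁻¹ ∈ S)
    (hSgen : Subgroup.closure S = ⊤)
    (φ : G → X → X) (hφ : ContGroupAction G X φ)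
    (μ : ProbabilityMeasure X) :
    μ.toMeasure (closure {x : X | PShPoint S φ x}) = 1 ↔
      μ ∈ closure {ν : ProbabilityMeasure X | CompatiblePSh S φ ν.toMeasure} :=
  stmt17_general S hSfin φ hφ μ
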